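/- arXiv:math/9801094 — 4 statements merged into one kernel-verified Lean document; each statement's English description precedes it below -/
import Mathlib

section
/- For v_k = 2·cos(2kπ/(2n+1)), the product Π_{k=1}^{n} v_k equals (-1)^{n/2} if n is even and (-1)^{(n+1)/2} if n is odd. -/
/-!
Multiply the product by the positive number `S = ∏_{k=1}^{n} sin (2kπ/(2n+1))`. Since
`2 cos x · sin x = sin 2x`, this gives `∏_{k=1}^{n} sin (4kπ/(2n+1))`. Folding `2k > n` to
`2n+1-2k` permutes `{1, …, n}` and flips the sign of the sine, so the latter product is
`(-1)^(n - n/2) · S`.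
-/

open Real Finset

section Folding

variable (n : ℕ)

theorem card_filter_lt_two_mul_Icc : #{k ∈ Icc 1 n | n < 2 * k} = n - n / 2 := by
  have : {k ∈ Icc 1 n | n < 2 * k} = Icc (n / 2 + 1) n := by
    ext k
    simp only [mem_filter, mem_Icc]
    omega
  rw [this, Nat.card_Icc]
  omega

theorem prod_Icc_fold {M : Type*} [CommMonoid M] (f : ℕ → M) :
    ∏ k ∈ Icc 1 n, f (if 2 * k ≤ n then 2 * k else 2 * n + 1 - 2 * k) =
      ∏ k ∈ Icc 1 n, f k := by
  refine prod_nbij' (fun k ↦ if 2 * k ≤ n then 2 * k else 2 * n + 1 - 2 * k)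
    (fun j ↦ if j % 2 = 0 then j / 2 else (2 * n + 1 - j) / 2) ?_ ?_ ?_ ?_ (fun _ _ ↦ rfl) <;>
  · intro k hk
    simp only [mem_Icc] at hk ⊢
    split_ifs <;> omega

theorem prod_Icc_two_mul_eq_neg_one_pow_mul {R : Type*} [CommRing R] (g : ℕ → R)
    (hg : ∀ m ∈ Icc 1 n, g (2 * n + 1 - m) = -g m) :
    ∏ k ∈ Icc 1 n, g (2 * k) = (-1) ^ (n - n / 2) * ∏ k ∈ Icc 1 n, g k := by
  calc ∏ k ∈ Icc 1 n, g (2 * k)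
      = ∏ k ∈ Icc 1 n, (if 2 * k ≤ n then 1 else -1) *
          g (if 2 * k ≤ n then 2 * k else 2 * n + 1 - 2 * k) := by
        refine prod_congr rfl fun k hk ↦ ?_
        rw [mem_Icc] at hk
        split_ifs with h
        · rw [one_mul]
        · have hfold := hg (2 * n + 1 - 2 * k) (mem_Icc.2 (by omega))
          rw [Nat.sub_sub_self (by omega)] at hfold
          rw [hfold, neg_one_mul]
    _ = (-1) ^ (n - n / 2) * ∏ k ∈ Icc 1 n, g k := by
        rw [prod_mul_distrib, prod_Icc_fold, prod_ite, prod_const_one, one_mul, prod_const]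
        simp only [not_le, card_filter_lt_two_mul_Icc]

end Folding

section Sines

variable {n : ℕ}

theorem sin_two_mul_pi_div_pos {j : ℕ} (hj : j ∈ Icc 1 n) :
    0 < sin (2 * j * π / (2 * n + 1)) := by
  rw [mem_Icc] at hj
  have h1 : (1 : ℝ) ≤ j := by exact_mod_cast hj.1
  have h2 : (j : ℝ) ≤ n := by exact_mod_cast hj.2
  have hN : (0 : ℝ) < 2 * n + 1 := by positivity
  apply sin_pos_of_pos_of_lt_pi
  · exact div_pos (by positivity) hN
  · rw [div_lt_iff₀ hN]
    nlinarith [pi_pos]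

theorem sin_two_mul_pi_div_sub {m : ℕ} (hm : m ≤ 2 * n + 1) :
    sin (2 * ↑(2 * n + 1 - m) * π / (2 * n + 1)) = -sin (2 * m * π / (2 * n + 1)) := by
  have hN : (2 * n + 1 : ℝ) ≠ 0 := by positivity
  have : 2 * ↑(2 * n + 1 - m) * π / (2 * n + 1) = 2 * π - 2 * m * π / (2 * n + 1) := by
    rw [Nat.cast_sub hm]
    push_cast
    field_simp
  rw [this, sin_two_pi_sub]

end Sines

theorem stmt_2_general (n : ℕ) (v : ℕ → ℝ)
    (hv : ∀ k, v k = 2 * Real.cos (2 * k * π / (2 * n + 1))) :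
    ∏ k ∈ Finset.Icc 1 n, v k =
      if Even n then (-1 : ℝ) ^ (n / 2) else (-1 : ℝ) ^ ((n + 1) / 2) := by
  set s : ℕ → ℝ := fun j ↦ sin (2 * j * π / (2 * n + 1))
  have hS : 0 < ∏ j ∈ Icc 1 n, s j := prod_pos fun j hj ↦ sin_two_mul_pi_div_pos hj
  have hdouble : ∀ k, v k * s k = s (2 * k) := fun k ↦ by
    simp only [s, hv, Nat.cast_mul, Nat.cast_ofNat]
    rw [show 2 * (2 * (k : ℝ)) * π / (2 * n + 1) = 2 * (2 * k * π / (2 * n + 1)) by ring,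
      sin_two_mul]
    ring
  have hprod : ∏ k ∈ Icc 1 n, v k = (-1) ^ (n - n / 2) := by
    refine mul_right_cancel₀ hS.ne' ?_
    rw [← prod_mul_distrib, prod_congr rfl fun k _ ↦ hdouble k]
    exact prod_Icc_two_mul_eq_neg_one_pow_mul n s fun m hm ↦
      sin_two_mul_pi_div_sub (by rw [mem_Icc] at hm; omega)
  rw [hprod]
  rcases Nat.even_or_odd' n with ⟨m, rfl | rfl⟩
  · rw [if_pos (even_two_mul m)]
    congr 1
    omega
  · rw [if_neg (Nat.not_even_two_mul_add_one m)]
    congr 1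
    omega

theorem stmt_2 (n : ℕ) (hn : 0 < n) (v : ℕ → ℝ)
    (hv : ∀ k, v k = 2 * Real.cos (2 * k * π / (2 * n + 1))) :
    ∏ k ∈ Finset.Icc 1 n, v k =
      if Even n then (-1 : ℝ) ^ (n / 2) else (-1 : ℝ) ^ ((n + 1) / 2) :=
  stmt_2_general n v hv
end

section
/- Let w : ℤ → R be any function into a commutative ring satisfying w_{−k} = w_k and w_{2n+1−k} = w_k for all k. Then the multiset { w_{k+j}·w_{k−j} : (j,k) ∈ P } equals the multiset { w_j·w_k : (j,k) ∈ P }, where P is the set of unordered pairs {j,k} with 1 ≤ j < k ≤ n. -/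
theorem stmt_5 {R : Type*} [CommRing R] (n : ℕ) (hn : 0 < n) (w : ℤ → R)
    (hsym1 : ∀ k : ℤ, w (-k) = w k)
    (hsym2 : ∀ k : ℤ, w (2 * n + 1 - k) = w k) :
    Multiset.map (fun p : ℤ × ℤ => w (p.2 + p.1) * w (p.2 - p.1))
        ((Finset.filter (fun p : ℤ × ℤ => p.1 < p.2)
          (Finset.Icc (1 : ℤ) n ×ˢ Finset.Icc (1 : ℤ) n)).val) =
      Multiset.map (fun p : ℤ × ℤ => w p.1 * w p.2)
        ((Finset.filter (fun p : ℤ × ℤ => p.1 < p.2)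
          (Finset.Icc (1 : ℤ) n ×ˢ Finset.Icc (1 : ℤ) n)).val) := by
  set S : Finset (ℤ × ℤ) := Finset.filter (fun p : ℤ × ℤ => p.1 < p.2)
      (Finset.Icc (1 : ℤ) n ×ˢ Finset.Icc (1 : ℤ) n) with hS
  set φ : ℤ × ℤ → ℤ × ℤ := fun p =>
      (p.2 - p.1, if p.2 + p.1 ≤ n then p.2 + p.1 else 2 * n + 1 - p.2 - p.1) with hφ
  have hmem : ∀ p ∈ S, φ p ∈ S := by
    intro p hp
    simp only [hS, hφ, Finset.mem_filter, Finset.mem_product, Finset.mem_Icc] at hp ⊢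
    obtain ⟨⟨⟨h1, h2⟩, h3, h4⟩, h5⟩ := hp
    split_ifs with h <;> refine ⟨⟨⟨?_, ?_⟩, ?_, ?_⟩, ?_⟩ <;> omega
  have hinj : Set.InjOn φ S := by
    intro p hp q hq hpq
    simp only [hS, Finset.coe_filter, Set.mem_setOf_eq, Finset.mem_product,
      Finset.mem_Icc] at hp hq
    obtain ⟨⟨⟨h1, h2⟩, h3, h4⟩, h5⟩ := hp
    obtain ⟨⟨⟨g1, g2⟩, g3, g4⟩, g5⟩ := hq
    simp only [hφ, Prod.ext_iff] at hpq
    obtain ⟨e1, e2⟩ := hpq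
    have : p.1 = q.1 ∧ p.2 = q.2 := by split_ifs at e2 <;> omega
    exact Prod.ext this.1 this.2
  have himg : Finset.image φ S = S := by
    apply Finset.eq_of_subset_of_card_le
    · intro x hx
      obtain ⟨p, hp, rfl⟩ := Finset.mem_image.mp hx
      exact hmem p hp
    · exact (Finset.card_image_of_injOn hinj).ge
  have hval : Multiset.map φ S.val = S.val := by
    rw [← Finset.image_val_of_injOn hinj, himg]
  calc Multiset.map (fun p : ℤ × ℤ => w (p.2 + p.1) * w (p.2 - p.1)) S.val
      = Multiset.map (fun p : ℤ × ℤ => w p.1 * w p.2) (Multiset.map φ S.val) := by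
        rw [Multiset.map_map]
        apply Multiset.map_congr rfl
        intro p hp
        simp only [hφ, Function.comp_apply]
        split_ifs with h
        · ring
        · have : (2 * (n : ℤ) + 1 - p.2 - p.1) = 2 * n + 1 - (p.2 + p.1) := by ring
          rw [this, hsym2]
          ring
    _ = Multiset.map (fun p : ℤ × ℤ => w p.1 * w p.2) S.val := by rw [hval]
end

section
/- With v_k = 2·cos(2kπ/(2n+1)), the product Π over unordered pairs {j,k} ⊆ {1,…,n}, j ≠ k, of (v_{k+j}·v_{k−j}) equals (Π_{i=1}^{n} v_i)^{n−1}, which is (-1)^{n/2} if n is even and 1 if n is odd. -/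
open Real Finset

/-!
Since `v (2n+1-m) = v m`, `v (k + j)` only depends on `k + j` folded into
`{1, …, n}` by `m ↦ min m (2n+1-m)`. Each `y ∈ {1, …, n}` is hit by exactly `n - y` of the
differences `k - j` and by exactly `y - 1` of the folded sums `k + j`, so every `v y` occurs
`n - 1` times in the pair product.

For the product `∏ v i`, multiply it by `∏ sin θᵢ > 0` with `θᵢ = 2iπ/(2n+1)`: since
`2 cos θ · sin θ = sin 2θ`, this gives `∏ sin θ_{2i}`, which the folding permutes back to
`∏ sin θᵢ`, with one sign for each of the `(n+1)/2` indices `i` with `2i > n`.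
-/

lemma prod_comp_eq_prod_pow_card {ι κ M : Type*} [CommMonoid M] [DecidableEq κ]
    {s : Finset ι} {t : Finset κ} {g : ι → κ} (h : ∀ i ∈ s, g i ∈ t) (f : κ → M) :
    ∏ i ∈ s, f (g i) = ∏ j ∈ t, f j ^ #{i ∈ s | g i = j} := by
  simp_rw [← prod_const, prod_fiberwise_of_maps_to' h]

noncomputable def pairs (n : ℕ) : Finset (ℤ × ℤ) :=
  {p ∈ Icc (1 : ℤ) n ×ˢ Icc (1 : ℤ) n | p.1 < p.2}

lemma mem_pairs {n : ℕ} {p : ℤ × ℤ} : p ∈ pairs n ↔ 1 ≤ p.1 ∧ p.1 < p.2 ∧ p.2 ≤ n := by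
  simp only [pairs, mem_filter, mem_product, mem_Icc]
  omega

lemma card_pairs_sub_eq {n : ℕ} {d : ℤ} (hd : 0 < d) :
    #{p ∈ pairs n | p.2 - p.1 = d} = #(Icc 1 (n - d)) := by
  refine card_nbij' Prod.fst (fun j => (j, j + d)) (fun p hp => ?_) (fun p hp => ?_)
    (fun p hp => ?_) (fun p hp => ?_) <;>
    simp only [coe_filter, coe_Icc, Set.mem_ofPred_eq, Set.mem_Icc, mem_pairs, Prod.ext_iff,
      true_and] at hp ⊢ <;> omega

lemma card_pairs_add_eq (n : ℕ) (s : ℤ) :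
    #{p ∈ pairs n | p.2 + p.1 = s} = #(Icc (max 1 (s - n)) ((s - 1) / 2)) := by
  refine card_nbij' Prod.fst (fun j => (j, s - j)) (fun p hp => ?_) (fun p hp => ?_)
    (fun p hp => ?_) (fun p hp => ?_) <;>
    simp only [coe_filter, coe_Icc, Set.mem_ofPred_eq, Set.mem_Icc, mem_pairs, Prod.ext_iff,
      true_and] at hp ⊢ <;> omega

section PairProduct

variable {M : Type*} [CommMonoid M] (n : ℕ) (f : ℤ → M)

lemma prod_pairs_sub :
    ∏ p ∈ pairs n, f (p.2 - p.1) = ∏ y ∈ Icc (1 : ℤ) n, f y ^ (n - y).toNat := by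
  have hmaps : ∀ p ∈ pairs n, p.2 - p.1 ∈ Icc (1 : ℤ) n := fun p hp => by
    rw [mem_pairs] at hp
    rw [mem_Icc]
    omega
  rw [prod_comp_eq_prod_pow_card hmaps]
  refine prod_congr rfl fun y hy => ?_
  rw [mem_Icc] at hy
  rw [card_pairs_sub_eq (by omega), Int.card_Icc, add_sub_cancel_right]

lemma prod_pairs_add (hf : ∀ m, f (2 * n + 1 - m) = f m) :
    ∏ p ∈ pairs n, f (p.2 + p.1) = ∏ y ∈ Icc (1 : ℤ) n, f y ^ (y - 1).toNat := by
  have hfold : ∀ m : ℤ, f m = f (min m (2 * n + 1 - m)) := fun m => by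
    rcases min_choice m (2 * n + 1 - m) with h | h <;> rw [h]
    rw [hf]
  have hmaps : ∀ p ∈ pairs n, min (p.2 + p.1) (2 * n + 1 - (p.2 + p.1)) ∈ Icc (1 : ℤ) n :=
    fun p hp => by
    rw [mem_pairs] at hp
    rw [mem_Icc]
    omega
  rw [prod_congr rfl fun p _ => hfold (p.2 + p.1), prod_comp_eq_prod_pow_card hmaps]
  refine prod_congr rfl fun y hy => ?_
  rw [mem_Icc] at hy
  have hfiber : {p ∈ pairs n | min (p.2 + p.1) (2 * (n : ℤ) + 1 - (p.2 + p.1)) = y} =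
      {p ∈ pairs n | p.2 + p.1 = y} ∪ {p ∈ pairs n | p.2 + p.1 = 2 * (n : ℤ) + 1 - y} := by
    rw [← filter_or]
    exact filter_congr fun p _ => by omega
  rw [hfiber, card_union_of_disjoint (disjoint_filter.2 fun p _ _ => by omega),
    card_pairs_add_eq, card_pairs_add_eq, Int.card_Icc, Int.card_Icc]
  congr 1
  omega

theorem prod_pairs_eq_prod_pow (hf : ∀ m, f (2 * n + 1 - m) = f m) :
    ∏ p ∈ pairs n, f (p.2 + p.1) * f (p.2 - p.1) = (∏ y ∈ Icc (1 : ℤ) n, f y) ^ (n - 1) := by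
  rw [prod_mul_distrib, prod_pairs_add n f hf, prod_pairs_sub, ← prod_mul_distrib, ← prod_pow]
  refine prod_congr rfl fun y hy => ?_
  rw [mem_Icc] at hy
  rw [← pow_add]
  congr 1
  omega

end PairProduct

lemma prod_two_mul_of_reflect_neg {R : Type*} [CommMonoid R] [HasDistribNeg R] (n : ℕ)
    (g : ℤ → R) (hg : ∀ m, g (2 * n + 1 - m) = -g m) :
    ∏ i ∈ Icc (1 : ℤ) n, g (2 * i) = (-1) ^ ((n + 1) / 2) * ∏ i ∈ Icc (1 : ℤ) n, g i := by
  have hsign : ∀ i : ℤ, g (2 * i) =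
      (if n < 2 * i then -1 else 1) * g (min (2 * i) (2 * n + 1 - 2 * i)) := fun i => by
    split_ifs with h
    · rw [min_eq_right (by omega), hg, neg_one_mul, neg_neg]
    · rw [min_eq_left (by omega), one_mul]
  have hperm : ∏ i ∈ Icc (1 : ℤ) n, g (min (2 * i) (2 * n + 1 - 2 * i)) =
      ∏ i ∈ Icc (1 : ℤ) n, g i :=
    prod_nbij' (fun i => min (2 * i) (2 * n + 1 - 2 * i))
      (fun j => if j % 2 = 0 then j / 2 else (2 * n + 1 - j) / 2)
      (fun i hi => by simp only [mem_Icc] at hi ⊢; omega)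
      (fun j hj => by simp only [mem_Icc] at hj ⊢; split_ifs <;> omega)
      (fun i hi => by simp only [mem_Icc] at hi ⊢; split_ifs <;> omega)
      (fun j hj => by simp only [mem_Icc] at hj ⊢; split_ifs <;> omega)
      (fun _ _ => rfl)
  have hcard : #{i ∈ Icc (1 : ℤ) n | (n : ℤ) < 2 * i} = (n + 1) / 2 := by
    rw [show {i ∈ Icc (1 : ℤ) n | (n : ℤ) < 2 * i} = Icc ((n : ℤ) / 2 + 1) n by
      ext i; simp only [mem_filter, mem_Icc]; omega]
    rw [Int.card_Icc]
    omega
  rw [prod_congr rfl fun i _ => hsign i, prod_mul_distrib, hperm, prod_ite, prod_const,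
    prod_const_one, hcard, mul_one]

lemma two_mul_div_reflect (n : ℕ) (m : ℤ) :
    2 * ((2 * n + 1 - m : ℤ) : ℝ) * π / (2 * n + 1) = 2 * π - 2 * m * π / (2 * n + 1) := by
  field_simp
  push_cast
  ring

lemma prod_two_mul_cos_eq_neg_one_pow (n : ℕ) :
    ∏ i ∈ Icc (1 : ℤ) n, 2 * cos (2 * i * π / (2 * n + 1)) = (-1) ^ ((n + 1) / 2) := by
  set s : ℤ → ℝ := fun m => sin (2 * m * π / (2 * n + 1))
  have hs_pos : 0 < ∏ i ∈ Icc (1 : ℤ) n, s i := prod_pos fun i hi => by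
    rw [mem_Icc] at hi
    have hi₁ : (1 : ℝ) ≤ i := by exact_mod_cast hi.1
    have hi₂ : (i : ℝ) ≤ n := by exact_mod_cast hi.2
    refine sin_pos_of_pos_of_lt_pi (by positivity) ?_
    rw [div_lt_iff₀ (by positivity)]
    nlinarith [pi_pos]
  have hs_double : ∀ i : ℤ, 2 * cos (2 * i * π / (2 * n + 1)) * s i = s (2 * i) := fun i => by
    have hangle : 2 * ((2 * i : ℤ) : ℝ) * π / (2 * n + 1) = 2 * (2 * i * π / (2 * n + 1)) := by
      push_cast
      ring
    simp only [s, hangle, sin_two_mul]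
    ring
  have hs_reflect : ∀ m, s (2 * n + 1 - m) = -s m := fun m => by
    simp only [s, two_mul_div_reflect, sin_two_pi_sub]
  refine mul_right_cancel₀ hs_pos.ne' ?_
  rw [← prod_mul_distrib, prod_congr rfl fun i _ => hs_double i,
    prod_two_mul_of_reflect_neg n s hs_reflect]

lemma neg_one_pow_half_succ_pow_pred {R : Type*} [Ring R] (n : ℕ) :
    ((-1 : R) ^ ((n + 1) / 2)) ^ (n - 1) = if Even n then (-1) ^ (n / 2) else 1 := by
  rw [← pow_mul]
  split_ifs with h
  · obtain ⟨m, rfl⟩ := h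
    rw [show (m + m + 1) / 2 = m by omega, show (m + m) / 2 = m by omega]
    rcases Nat.even_or_odd m with ⟨k, rfl⟩ | ⟨k, rfl⟩
    · rw [Even.neg_one_pow ⟨k, rfl⟩, Even.neg_one_pow (Even.mul_right ⟨k, rfl⟩ _)]
    · rw [Odd.neg_one_pow ⟨k, rfl⟩, Odd.neg_one_pow (Odd.mul ⟨k, rfl⟩ ⟨2 * k, by omega⟩)]
  · have hpred : Even (n - 1) := Nat.Odd.sub_odd (Nat.not_even_iff_odd.1 h) odd_one
    exact Even.neg_one_pow (hpred.mul_left _)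

theorem stmt_6_general (n : ℕ) (v : ℤ → ℝ)
    (hv : ∀ k : ℤ, v k = 2 * Real.cos (2 * k * π / (2 * n + 1))) :
    (∏ p ∈ Finset.filter (fun p : ℤ × ℤ => p.1 < p.2)
        (Finset.Icc (1 : ℤ) n ×ˢ Finset.Icc (1 : ℤ) n),
        (v (p.2 + p.1) * v (p.2 - p.1)))
      = (∏ i ∈ Finset.Icc (1 : ℤ) n, v i) ^ (n - 1) ∧
    (∏ i ∈ Finset.Icc (1 : ℤ) n, v i) ^ (n - 1) =
      if Even n then (-1 : ℝ) ^ (n / 2) else 1 := by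
  have hv_reflect : ∀ m, v (2 * n + 1 - m) = v m := fun m => by
    rw [hv, hv, two_mul_div_reflect, cos_two_pi_sub]
  have hprod : ∏ i ∈ Icc (1 : ℤ) n, v i = (-1) ^ ((n + 1) / 2) := by
    simp only [hv, prod_two_mul_cos_eq_neg_one_pow]
  exact ⟨prod_pairs_eq_prod_pow n v hv_reflect, by rw [hprod, neg_one_pow_half_succ_pow_pred]⟩

theorem stmt_6 (n : ℕ) (hn : 0 < n) (v : ℤ → ℝ)
    (hv : ∀ k : ℤ, v k = 2 * Real.cos (2 * k * π / (2 * n + 1))) :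
    (∏ p ∈ Finset.filter (fun p : ℤ × ℤ => p.1 < p.2)
        (Finset.Icc (1 : ℤ) n ×ˢ Finset.Icc (1 : ℤ) n),
        (v (p.2 + p.1) * v (p.2 - p.1)))
      = (∏ i ∈ Finset.Icc (1 : ℤ) n, v i) ^ (n - 1) ∧
    (∏ i ∈ Finset.Icc (1 : ℤ) n, v i) ^ (n - 1) =
      if Even n then (-1 : ℝ) ^ (n / 2) else 1 :=
  stmt_6_general n v hv
end

section
/- With B_n = Π_{1≤j<k≤n} (v_j² + v_k²) where v_k = 2·cos(2kπ/(2n+1)), every B_n is odd. -/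
/-!
With `m = 2n + 1` and `ζ = exp (2πi/m)`, `v k = ζ ^ k + ζ⁻¹ ^ k` is an algebraic integer.
Modulo `2`, `B = ∏ (v j ^ 2 + v k ^ 2) ≡ (∏ (v j + v k)) ^ 2`, and each `v j + v k` is a unit
among the algebraic integers, since `ζ ^ k (v j + v k) = (1 + ζ ^ (k - j)) (1 + ζ ^ (k + j))`
and `1 + x` is invertible for every `m`-th root of unity `x ≠ 1` when `m` is odd. So if `B`
were even, `2` would divide a unit, making `1/2` an algebraic integer.
-/

open Real Finset

theorem isUnit_one_add_of_pow_eq_one {R : Type*} [CommRing R] [IsDomain R] {x : R} {m : ℕ}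
    (hm : Odd m) (hxm : x ^ m = 1) (hx : x ≠ 1) : IsUnit (1 + x) := by
  obtain ⟨n, rfl⟩ := hm
  have hgeom : ∑ i ∈ range (2 * n + 1), x ^ i = 0 := by
    have h := geom_sum_mul x (2 * n + 1)
    rw [hxm, sub_self] at h
    exact (mul_eq_zero.mp h).resolve_right (sub_ne_zero.mpr hx)
  have hsplit : ∀ N, (1 + x) * ∑ i ∈ range N, x ^ (2 * i) = ∑ r ∈ range (2 * N), x ^ r := by
    intro N
    induction N with
    | zero => simp
    | succ N ih =>
      rw [sum_range_succ, mul_add, ih, show 2 * (N + 1) = 2 * N + 1 + 1 by ring,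
        sum_range_succ, sum_range_succ]
      ring
  -- `(1 + x) * ∑ x ^ (2 * i)` is the full geometric sum up to `x ^ (2 * n + 1) = 1`.
  refine IsUnit.of_mul_eq_one (∑ i ∈ range (n + 1), x ^ (2 * i)) ?_
  rw [hsplit, show 2 * (n + 1) = 2 * n + 1 + 1 by ring, sum_range_succ, hgeom, hxm, zero_add]

theorem pow_mul_pow_add_pow_add_pow_add_pow_of_mul_eq_one {R : Type*} [CommRing R] {ζ η : R}
    (h : ζ * η = 1) {j k : ℕ} (hjk : j ≤ k) :
    ζ ^ k * (ζ ^ j + η ^ j + (ζ ^ k + η ^ k)) = (1 + ζ ^ (k - j)) * (1 + ζ ^ (k + j)) := by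
  obtain ⟨d, rfl⟩ := Nat.exists_eq_add_of_le hjk
  have hj : (ζ * η) ^ j = 1 := by rw [h, one_pow]
  have hk : (ζ * η) ^ (j + d) = 1 := by rw [h, one_pow]
  rw [Nat.add_sub_cancel_left]
  linear_combination ζ ^ d * hj + hk

theorem IsPrimitiveRoot.isUnit_pow_add_pow_add_pow_add_pow {R : Type*} [CommRing R] [IsDomain R]
    {ζ η : R} {m : ℕ} (hζ : IsPrimitiveRoot ζ m) (hm : Odd m) (h : ζ * η = 1) {j k : ℕ}
    (hjk : j < k) (hkm : j + k < m) : IsUnit (ζ ^ j + η ^ j + (ζ ^ k + η ^ k)) := by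
  have hunit : ∀ a, 0 < a → a < m → IsUnit (1 + ζ ^ a) := fun a ha0 ham =>
    isUnit_one_add_of_pow_eq_one hm (by rw [← pow_mul, mul_comm, pow_mul, hζ.pow_eq_one, one_pow])
      (hζ.pow_ne_one_of_pos_of_lt ha0.ne' ham)
  refine isUnit_of_mul_isUnit_right (x := ζ ^ k) ?_
  rw [pow_mul_pow_add_pow_add_pow_add_pow_of_mul_eq_one h hjk.le]
  exact (hunit _ (by omega) (by omega)).mul (hunit _ (by omega) (by omega))

theorem two_dvd_prod_sq_add_sq_sub_sq {R ι : Type*} [CommRing R] (s : Finset ι) (f g : ι → R) :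
    (2 : R) ∣ ∏ i ∈ s, (f i ^ 2 + g i ^ 2) - (∏ i ∈ s, (f i + g i)) ^ 2 := by
  -- Modulo `2`, squaring is additive.
  have hsq : ∀ i, Ideal.Quotient.mk (Ideal.span {(2 : R)}) (f i ^ 2 + g i ^ 2)
      = Ideal.Quotient.mk (Ideal.span {(2 : R)}) ((f i + g i) ^ 2) :=
    fun i => Ideal.Quotient.eq.mpr (Ideal.mem_span_singleton.mpr ⟨-(f i * g i), by ring⟩)
  rw [← Ideal.mem_span_singleton, ← Ideal.Quotient.eq, map_prod, map_pow, map_prod, ← prod_pow]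
  exact prod_congr rfl fun i _ => by rw [hsq, map_pow]

theorem isUnit_of_isUnit_intCast_integralClosure {K : Type*} [Field K] [CharZero K] {n : ℤ}
    (h : IsUnit (n : integralClosure ℤ K)) : IsUnit n := by
  obtain ⟨u, hu⟩ := h.exists_right_inv
  have hnK : (n : K) * u = 1 := by exact_mod_cast congrArg Subtype.val hu
  have hint : IsIntegral ℤ (algebraMap ℚ K (n : ℚ)⁻¹) := by
    rw [map_inv₀, map_intCast, inv_eq_of_mul_eq_one_right hnK]
    exact u.2
  obtain ⟨z, hz⟩ := IsIntegrallyClosed.isIntegral_iff.mp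
    ((isIntegral_algebraMap_iff (algebraMap ℚ K).injective).mp hint)
  refine IsUnit.of_mul_eq_one z ?_
  have hn : (n : ℚ) ≠ 0 := Int.cast_ne_zero.mpr (by rintro rfl; simp at hnK)
  have : (n : ℚ) * z = 1 := by rw [show (z : ℚ) = algebraMap ℤ ℚ z from rfl, hz,
    mul_inv_cancel₀ hn]
  exact_mod_cast this

theorem Int.odd_of_two_dvd_intCast_sub_sq {K : Type*} [Field K] [CharZero K] {B : ℤ}
    {u : integralClosure ℤ K} (hu : IsUnit u) (h : (2 : integralClosure ℤ K) ∣ B - u ^ 2) :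
    Odd B := by
  by_contra hB
  obtain ⟨b, rfl⟩ := Int.not_odd_iff_even.mp hB
  have h2 : (2 : integralClosure ℤ K) ∣ u ^ 2 := by
    have : (2 : integralClosure ℤ K) ∣ ((b + b : ℤ) : integralClosure ℤ K) :=
      ⟨b, by push_cast; ring⟩
    simpa using dvd_sub this h
  have := isUnit_of_isUnit_intCast_integralClosure (K := K) (n := 2)
    (by exact_mod_cast isUnit_of_dvd_unit h2 (hu.pow 2))
  norm_num [Int.isUnit_iff] at this

theorem Complex.two_mul_cos_eq_pow_add_inv_pow (m k : ℕ) :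
    ((2 * Real.cos (2 * k * π / m) : ℝ) : ℂ)
      = Complex.exp (2 * π * Complex.I / m) ^ k
        + (Complex.exp (2 * π * Complex.I / m))⁻¹ ^ k := by
  rw [← Complex.exp_neg, ← Complex.exp_nat_mul, ← Complex.exp_nat_mul]
  push_cast
  rw [Complex.two_cos]
  ring_nf

theorem stmt_11_general (n : ℕ) (v : ℕ → ℝ)
    (hv : ∀ k, v k = 2 * Real.cos (2 * k * π / (2 * n + 1)))
    (B : ℤ)
    (hB : (B : ℝ) =
      ∏ p ∈ Finset.filter (fun p : ℕ × ℕ => p.1 < p.2)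
        (Finset.Icc 1 n ×ˢ Finset.Icc 1 n), (v p.1 ^ 2 + v p.2 ^ 2)) :
    Odd B := by
  let ζ := Complex.exp (2 * π * Complex.I / (2 * n + 1 : ℕ))
  have hζ : IsPrimitiveRoot ζ (2 * n + 1) := Complex.isPrimitiveRoot_exp _ (by omega)
  let ζR : integralClosure ℤ ℂ := ⟨ζ, hζ.isIntegral (by omega)⟩
  let ηR : integralClosure ℤ ℂ := ⟨ζ⁻¹, hζ.inv.isIntegral (by omega)⟩
  have hζR : IsPrimitiveRoot ζR (2 * n + 1) := IsPrimitiveRoot.coe_submonoidClass_iff.mp hζ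
  have hζηR : ζR * ηR = 1 := Subtype.ext (mul_inv_cancel₀ (hζ.ne_zero (by omega)))
  have hw : ∀ k, ((ζR ^ k + ηR ^ k : integralClosure ℤ ℂ) : ℂ) = v k := fun k => by
    rw [hv, show (2 * n + 1 : ℝ) = (2 * n + 1 : ℕ) by push_cast; ring,
      Complex.two_mul_cos_eq_pow_add_inv_pow]
    rfl
  have hBR : (B : integralClosure ℤ ℂ) = ∏ p ∈ Finset.filter (fun p : ℕ × ℕ => p.1 < p.2)
      (Finset.Icc 1 n ×ˢ Finset.Icc 1 n),
        ((ζR ^ p.1 + ηR ^ p.1) ^ 2 + (ζR ^ p.2 + ηR ^ p.2) ^ 2) := by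
    apply Subtype.ext
    push_cast [hw]
    exact_mod_cast hB
  refine Int.odd_of_two_dvd_intCast_sub_sq (IsUnit.prod_iff.mpr fun p hp => ?_)
    (hBR ▸ two_dvd_prod_sq_add_sq_sub_sq _ _ _)
  simp only [Finset.mem_filter, Finset.mem_product, Finset.mem_Icc] at hp
  exact hζR.isUnit_pow_add_pow_add_pow_add_pow ⟨n, rfl⟩ hζηR hp.2 (by omega)

theorem stmt_11 (n : ℕ) (hn : 0 < n) (v : ℕ → ℝ)
    (hv : ∀ k, v k = 2 * Real.cos (2 * k * π / (2 * n + 1)))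
    (B : ℤ)
    (hB : (B : ℝ) =
      ∏ p ∈ Finset.filter (fun p : ℕ × ℕ => p.1 < p.2)
        (Finset.Icc 1 n ×ˢ Finset.Icc 1 n), (v p.1 ^ 2 + v p.2 ^ 2)) :
    Odd B :=
  stmt_11_general n v hv B hB
end
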